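/- Let n ≥ 2 and let h : ℝ → ℝ be continuous. Then for every v ∈ ℝ^n with v ≠ 0, ∫_{S^{n−1}} h(⟨σ, v⟩) dσ = ω_{n−2} ∫_{−1}^{1} (1−s²)^{(n−3)/2} h(|v|·s) ds, where ω_{n−2} is the total surface measure of S^{n−2} (with the convention ω_0 = 2 for n = 2). -/

import Mathlib

open MeasureTheory
open scoped RealInnerProductSpace

/-- `ω_k`, the total surface measure of the unit sphere `S^k ⊆ ℝ^{k+1}`. -/
noncomputable def sphereVol (k : ℕ) : ℝ :=
  ((volume : Measure (EuclideanSpace ℝ (Fin (k + 1)))).toSphere Set.univ).toReal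

/-!
Write `h ⟪σ, v⟫ = g ⟪σ, u⟫` with `u = v / ‖v‖` and `g s = h (‖v‖ s)`, and integrate
`F x = 1_{‖x‖ < 1} g ⟪x / ‖x‖, u⟫` over `ℝⁿ` in two ways. In polar coordinates,
`∫ F = (1 / n) ∫_{S^{n-1}} g ⟪σ, u⟫ dσ`. Alternatively, rotate `u` to the first basis vector and
write `x = (t, y)` with `y ∈ ℝ^{n-1}`: the integral over `y` is radial and gives
`ω_{n-2} ∫_0^∞ ρ^{n-2} … dρ`, and polar coordinates `(t, ρ) = (r cos θ, r sin θ)` in the half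
plane `ρ > 0` turn `∫ F` into `(1 / n) ω_{n-2} ∫_0^π sin^{n-2} θ g (cos θ) dθ`. The substitution
`s = cos θ` finishes the proof.
-/

open Set Metric Module

theorem integral_volumeIoiPow (k : ℕ) (f : ℝ → ℝ) :
    ∫ r : Ioi (0 : ℝ), f r ∂(Measure.volumeIoiPow k) = ∫ r in Ioi (0 : ℝ), r ^ k * f r := by
  simp only [Measure.volumeIoiPow, ENNReal.ofReal]
  rw [integral_withDensity_eq_integral_smul
      ((measurable_subtype_coe.pow_const _).real_toNNReal),
    integral_subtype_comap measurableSet_Ioi fun a : ℝ ↦ Real.toNNReal (a ^ k) • f a,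
    setIntegral_congr_fun measurableSet_Ioi fun x hx ↦ ?_]
  rw [NNReal.smul_def, Real.coe_toNNReal _ (pow_nonneg hx.out.le _), smul_eq_mul]

theorem integral_radial_mul_angular {E : Type*} [NormedAddCommGroup E] [NormedSpace ℝ E]
    [MeasurableSpace E] [BorelSpace E] [FiniteDimensional ℝ E] [Nontrivial E] (μ : Measure E)
    [μ.IsAddHaarMeasure] (ψ : ℝ → ℝ) (g : E → ℝ) :
    ∫ x, ψ ‖x‖ * g (‖x‖⁻¹ • x) ∂μ =
      (∫ σ : sphere (0 : E) 1, g σ ∂μ.toSphere) *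
        ∫ r in Ioi (0 : ℝ), r ^ (finrank ℝ E - 1) * ψ r := by
  calc ∫ x, ψ ‖x‖ * g (‖x‖⁻¹ • x) ∂μ
      = ∫ x : ({0}ᶜ : Set E), ψ ‖(x : E)‖ * g (‖(x : E)‖⁻¹ • (x : E)) ∂μ.comap (↑) := by
        rw [integral_subtype_comap (measurableSet_singleton _).compl
          fun x ↦ ψ ‖x‖ * g (‖x‖⁻¹ • x), restrict_compl_singleton]
    _ = ∫ p, g p.1 * ψ p.2 ∂μ.toSphere.prod (.volumeIoiPow (finrank ℝ E - 1)) := by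
        rw [← μ.measurePreserving_homeomorphUnitSphereProd.integral_comp
          (Homeomorph.measurableEmbedding _)]
        simp only [homeomorphUnitSphereProd_apply_fst_coe, homeomorphUnitSphereProd_apply_snd_coe,
          mul_comm]
    _ = _ := by
        rw [integral_prod_mul (fun σ : sphere (0 : E) 1 ↦ g σ) (fun r : Ioi (0 : ℝ) ↦ ψ r),
          integral_volumeIoiPow]

theorem integral_fun_norm_euclideanSpace (k : ℕ) (f : ℝ → ℝ) :
    ∫ y : EuclideanSpace ℝ (Fin (k + 1)), f ‖y‖ =
      sphereVol k * ∫ r in Ioi (0 : ℝ), r ^ k * f r := by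
  have := integral_radial_mul_angular (volume : Measure (EuclideanSpace ℝ (Fin (k + 1)))) f 1
  simp only [Pi.one_apply, mul_one, integral_const, smul_eq_mul, finrank_euclideanSpace_fin,
    Nat.add_sub_cancel] at this
  exact this

theorem integrable_of_norm_le_of_eq_zero_of_notMem_ball {X F : Type*} [PseudoMetricSpace X]
    [ProperSpace X] [MeasurableSpace X] [OpensMeasurableSpace X] [NormedAddCommGroup F]
    {μ : Measure X} [IsFiniteMeasureOnCompacts μ] {f : X → F} (hf : AEStronglyMeasurable f μ)
    {x₀ : X} {r C : ℝ} (hle : ∀ x ∈ ball x₀ r, ‖f x‖ ≤ C) (hzero : ∀ x ∉ ball x₀ r, f x = 0) :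
    Integrable f μ :=
  (integrableOn_iff_integrable_of_support_subset fun x hx ↦ by_contra fun h ↦ hx (hzero x h)).1 <|
    Measure.integrableOn_of_bounded measure_ball_lt_top.ne hf <|
      ae_restrict_of_forall_mem measurableSet_ball hle

theorem integral_Ioi_pow_mul_indicator_Iio_one (k : ℕ) :
    ∫ r in Ioi (0 : ℝ), r ^ k * (Iio 1).indicator 1 r = 1 / (k + 1) := by
  have hind : ∀ r : ℝ, r ^ k * (Iio 1).indicator 1 r = (Iio 1).indicator (· ^ k) r := fun r ↦ by
    simp [indicator_apply]
  simp_rw [hind]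
  rw [setIntegral_indicator measurableSet_Iio, Ioi_inter_Iio, ← integral_Ioc_eq_integral_Ioo,
    ← intervalIntegral.integral_of_le zero_le_one, integral_pow]
  norm_num

theorem exists_linearIsometryEquiv_apply_zero_eq_inner {E : Type*} [NormedAddCommGroup E]
    [InnerProductSpace ℝ E] {n : ℕ} (hn : finrank ℝ E = n + 1) {u : E} (hu : ‖u‖ = 1) :
    ∃ e : E ≃ₗᵢ[ℝ] EuclideanSpace ℝ (Fin (n + 1)), ∀ x, e x 0 = ⟪u, x⟫ := by
  have := Module.finite_of_finrank_eq_succ hn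
  have hu' : Orthonormal ℝ (({0} : Set (Fin (n + 1))).domRestrict fun _ ↦ u) :=
    orthonormal_subsingleton_iff.2 fun _ ↦ hu
  obtain ⟨b, hb⟩ := hu'.exists_orthonormalBasis_extension_of_card_eq (by simpa using hn)
  exact ⟨b.repr, fun x ↦ by rw [b.repr_apply_apply, hb 0 rfl]⟩

namespace EuclideanSpace

noncomputable def consMeasurableEquiv (m : ℕ) :
    ℝ × EuclideanSpace ℝ (Fin m) ≃ᵐ EuclideanSpace ℝ (Fin (m + 1)) :=
  ((MeasurableEquiv.refl ℝ).prodCongr (MeasurableEquiv.toLp 2 (Fin m → ℝ)).symm).trans <|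
    (MeasurableEquiv.piFinSuccAbove (fun _ ↦ ℝ) 0).symm.trans (MeasurableEquiv.toLp 2 _)

theorem consMeasurableEquiv_apply_zero (m : ℕ) (p : ℝ × EuclideanSpace ℝ (Fin m)) :
    consMeasurableEquiv m p 0 = p.1 :=
  rfl

theorem norm_consMeasurableEquiv (m : ℕ) (p : ℝ × EuclideanSpace ℝ (Fin m)) :
    ‖consMeasurableEquiv m p‖ = √(p.1 ^ 2 + ‖p.2‖ ^ 2) := by
  rw [EuclideanSpace.norm_eq, EuclideanSpace.norm_eq, Fin.sum_univ_succ,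
    Real.sq_sqrt (by positivity)]
  simp only [consMeasurableEquiv_apply_zero, Real.norm_eq_abs, sq_abs]
  rfl

theorem measurePreserving_consMeasurableEquiv (m : ℕ) :
    MeasurePreserving (consMeasurableEquiv m) :=
  (((MeasurePreserving.id volume).prod
      (volume_preserving_symm_measurableEquiv_toLp (Fin m))).trans
    (volume_preserving_piFinSuccAbove (fun _ ↦ ℝ) 0).symm).trans
    (volume_preserving_symm_measurableEquiv_toLp (Fin (m + 1))).symm

end EuclideanSpace

open EuclideanSpace in
theorem integral_comp_inner_norm_eq_integral_prod (m : ℕ) {u : EuclideanSpace ℝ (Fin (m + 1))}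
    (hu : ‖u‖ = 1) (Φ : ℝ → ℝ → ℝ) :
    ∫ x, Φ ⟪u, x⟫ ‖x‖ = ∫ p : ℝ × EuclideanSpace ℝ (Fin m), Φ p.1 √(p.1 ^ 2 + ‖p.2‖ ^ 2) := by
  obtain ⟨e, he⟩ := exists_linearIsometryEquiv_apply_zero_eq_inner (n := m) (by simp) hu
  calc ∫ x, Φ ⟪u, x⟫ ‖x‖ = ∫ x, Φ (e x 0) ‖e x‖ := by simp only [he, LinearIsometryEquiv.norm_map]
    _ = ∫ y : EuclideanSpace ℝ (Fin (m + 1)), Φ (y 0) ‖y‖ :=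
        e.measurePreserving.integral_comp e.toHomeomorph.measurableEmbedding
          fun y : EuclideanSpace ℝ (Fin (m + 1)) ↦ Φ (y 0) ‖y‖
    _ = _ := by
      rw [← (measurePreserving_consMeasurableEquiv m).integral_comp']
      simp only [consMeasurableEquiv_apply_zero, norm_consMeasurableEquiv]

theorem integral_prod_euclideanSpace_fun_norm (m : ℕ) (f : ℝ → ℝ → ℝ)
    (hf : Integrable fun p : ℝ × EuclideanSpace ℝ (Fin (m + 1)) ↦ f p.1 ‖p.2‖)
    (hf' : Integrable fun p : ℝ × ℝ ↦ (Ioi 0).indicator (fun ρ ↦ ρ ^ m * f p.1 ρ) p.2) :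
    ∫ p : ℝ × EuclideanSpace ℝ (Fin (m + 1)), f p.1 ‖p.2‖ =
      sphereVol m * ∫ p : ℝ × ℝ, (Ioi 0).indicator (fun ρ ↦ ρ ^ m * f p.1 ρ) p.2 := by
  rw [Measure.volume_eq_prod] at hf hf'
  rw [Measure.volume_eq_prod, Measure.volume_eq_prod, integral_prod _ hf, integral_prod _ hf',
    ← integral_const_mul]
  simp only [integral_fun_norm_euclideanSpace, integral_indicator measurableSet_Ioi]

open Real in
theorem integral_upperHalfPlane_radial_mul_angular (m : ℕ) (ψ g : ℝ → ℝ) :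
    ∫ p : ℝ × ℝ, (Ioi 0).indicator
        (fun ρ ↦ ρ ^ m * (ψ √(p.1 ^ 2 + ρ ^ 2) * g (p.1 / √(p.1 ^ 2 + ρ ^ 2)))) p.2 =
      (∫ r in Ioi 0, r ^ (m + 1) * ψ r) * ∫ θ in Ioo 0 π, sin θ ^ m * g (cos θ) := by
  have hsin : Ioo (-π) π ∩ {θ | 0 < sin θ} = Ioo 0 π := by
    ext θ
    refine ⟨fun ⟨⟨h₁, h₂⟩, h₃⟩ ↦ ⟨?_, h₂⟩, fun ⟨h₁, h₂⟩ ↦ ⟨⟨by linarith [pi_pos], h₂⟩,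
      sin_pos_of_pos_of_lt_pi h₁ h₂⟩⟩
    by_contra! h
    exact (sin_nonpos_of_nonpos_of_neg_pi_le h h₁.le).not_gt h₃
  rw [← integral_comp_polarCoord_symm, polarCoord_target, Measure.volume_eq_prod,
    ← hsin, ← setIntegral_indicator (measurableSet_lt measurable_const measurable_sin),
    ← setIntegral_prod_mul]
  refine setIntegral_congr_fun (measurableSet_Ioi.prod measurableSet_Ioo) ?_
  rintro ⟨r, θ⟩ ⟨hr, -⟩
  have hr : 0 < r := hr
  have hnorm : √((r * cos θ) ^ 2 + (r * sin θ) ^ 2) = r := by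
    rw [mul_pow, mul_pow, ← mul_add, cos_sq_add_sin_sq, mul_one, sqrt_sq hr.le]
  simp only [polarCoord_symm_apply, smul_eq_mul, indicator_apply, mem_Ioi, mem_ofPred_eq,
    mul_pos_iff_of_pos_left hr, hnorm]
  split_ifs
  · rw [mul_div_cancel_left₀ _ hr.ne']
    ring
  · simp

open Real in
theorem integral_sin_pow_mul_comp_cos (m : ℕ) (g : ℝ → ℝ) :
    ∫ θ in Ioo 0 π, sin θ ^ m * g (cos θ) =
      ∫ s in (-1 : ℝ)..1, (1 - s ^ 2) ^ (((m : ℝ) - 1) / 2) * g s := by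
  have hcos : cos '' Ioo 0 π = Ioo (-1) 1 := cosPartialHomeomorph.image_source_eq_target
  rw [intervalIntegral.integral_of_le (by norm_num), integral_Ioc_eq_integral_Ioo, ← hcos,
    integral_image_eq_integral_abs_deriv_smul measurableSet_Ioo
      (fun θ _ ↦ (hasDerivAt_cos θ).hasDerivWithinAt) (injOn_cos.mono Ioo_subset_Icc_self)]
  refine setIntegral_congr_fun measurableSet_Ioo fun θ hθ ↦ ?_
  have hs : 0 < sin θ := sin_pos_of_pos_of_lt_pi hθ.1 hθ.2
  have hpow : (1 - cos θ ^ 2) ^ (((m : ℝ) - 1) / 2) * sin θ = sin θ ^ m := by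
    rw [← sin_sq, ← rpow_natCast (sin θ) 2, ← rpow_mul hs.le, ← rpow_add_one hs.ne',
      ← rpow_natCast]
    congr 1
    push_cast
    ring
  rw [smul_eq_mul, abs_neg, abs_of_pos hs, ← hpow]
  ring

/-- `x ↦ 1_{‖x‖ < 1} g (x₀ / ‖x‖)` in the cylindrical coordinates `t = x₀`, `ρ = ‖(x₁, …, xₖ)‖`. -/
noncomputable def zonalCutoff (g : ℝ → ℝ) (t ρ : ℝ) : ℝ :=
  (Iio 1).indicator 1 √(t ^ 2 + ρ ^ 2) * g (t / √(t ^ 2 + ρ ^ 2))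

namespace zonalCutoff

variable {g : ℝ → ℝ}

theorem eq_zero {t ρ : ℝ} (h : 1 ≤ t ^ 2 + ρ ^ 2) : zonalCutoff g t ρ = 0 := by
  rw [zonalCutoff, indicator_of_notMem, zero_mul]
  simpa using Real.one_le_sqrt.2 h

theorem norm_le {M : ℝ} (hM : ∀ s ∈ Icc (-1 : ℝ) 1, ‖g s‖ ≤ M) (t ρ : ℝ) :
    ‖zonalCutoff g t ρ‖ ≤ M := by
  have hle : |t| ≤ √(t ^ 2 + ρ ^ 2) := Real.abs_le_sqrt (by nlinarith)
  have hquot : t / √(t ^ 2 + ρ ^ 2) ∈ Icc (-1 : ℝ) 1 := by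
    rw [mem_Icc, ← abs_le, abs_div, abs_of_nonneg (Real.sqrt_nonneg _)]
    exact div_le_one_of_le₀ hle (Real.sqrt_nonneg _)
  rw [zonalCutoff, norm_mul]
  calc _ ≤ 1 * M := by
        gcongr
        · rw [indicator_apply]
          split_ifs <;> simp
        · exact hM _ hquot
    _ = M := one_mul M

theorem measurable (hg : Measurable g) : Measurable (Function.uncurry (zonalCutoff g)) := by
  unfold zonalCutoff
  fun_prop (disch := exact measurableSet_Iio)

theorem exists_norm_le (hg : Continuous g) : ∃ M, ∀ t ρ, ‖zonalCutoff g t ρ‖ ≤ M := by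
  obtain ⟨M, hM⟩ := (isCompact_Icc (a := (-1 : ℝ)) (b := 1)).exists_bound_of_continuousOn
    hg.continuousOn
  exact ⟨M, norm_le hM⟩

theorem integrable_comp_norm (hg : Continuous g) (k : ℕ) :
    Integrable fun p : ℝ × EuclideanSpace ℝ (Fin k) ↦ zonalCutoff g p.1 ‖p.2‖ := by
  obtain ⟨M, hM⟩ := exists_norm_le hg
  refine integrable_of_norm_le_of_eq_zero_of_notMem_ball
    ((measurable hg.measurable).comp
      (measurable_fst.prodMk measurable_snd.norm)).aestronglyMeasurable
    (x₀ := 0) (r := 1) (fun p _ ↦ hM _ _) fun p hp ↦ eq_zero ?_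
  rw [mem_ball_zero_iff, Prod.norm_def, not_lt, le_max_iff, Real.norm_eq_abs] at hp
  rcases hp with hp | hp
  · nlinarith [sq_abs p.1, sq_nonneg ‖p.2‖]
  · nlinarith [sq_nonneg p.1]

theorem integrable_indicator_Ioi_pow_mul (hg : Continuous g) (m : ℕ) :
    Integrable fun p : ℝ × ℝ ↦ (Ioi 0).indicator (fun ρ ↦ ρ ^ m * zonalCutoff g p.1 ρ) p.2 := by
  obtain ⟨M, hM⟩ := exists_norm_le hg
  refine integrable_of_norm_le_of_eq_zero_of_notMem_ball (x₀ := 0) (r := 1) (C := M) ?_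
    (fun p hp ↦ ?_) fun p hp ↦ ?_
  · exact (((measurable_snd.pow_const m).mul (measurable hg.measurable)).indicator
      (measurable_snd measurableSet_Ioi)).aestronglyMeasurable
  · rw [mem_ball_zero_iff, Prod.norm_def, max_lt_iff, Real.norm_eq_abs, Real.norm_eq_abs] at hp
    rw [indicator_apply]
    split_ifs
    · rw [norm_mul, norm_pow, Real.norm_eq_abs]
      calc _ ≤ 1 * M := by
            gcongr
            · exact pow_le_one₀ (abs_nonneg _) hp.2.le
            · exact hM _ _
        _ = M := one_mul M
    · simpa using (norm_nonneg _).trans (hM 0 0)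
  · rw [mem_ball_zero_iff, Prod.norm_def, not_lt, le_max_iff, Real.norm_eq_abs,
      Real.norm_eq_abs] at hp
    rw [indicator_apply, eq_zero, mul_zero, ite_self]
    rcases hp with hp | hp <;> nlinarith [sq_abs p.1, abs_nonneg p.1, sq_abs p.2, abs_nonneg p.2]

end zonalCutoff

open Real in
theorem integral_sphere_comp_inner_of_norm_eq_one (m : ℕ) {g : ℝ → ℝ} (hg : Continuous g)
    {u : EuclideanSpace ℝ (Fin (m + 2))} (hu : ‖u‖ = 1) :
    ∫ σ : sphere (0 : EuclideanSpace ℝ (Fin (m + 2))) 1,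
        g ⟪(σ : EuclideanSpace ℝ (Fin (m + 2))), u⟫ ∂(volume : Measure (EuclideanSpace ℝ (Fin (m + 2)))).toSphere =
      sphereVol m * ∫ θ in Ioo 0 π, sin θ ^ m * g (cos θ) := by
  have hc : ∫ r in Ioi (0 : ℝ), r ^ (m + 1) * (Iio 1).indicator 1 r = 1 / (m + 2) := by
    rw [integral_Ioi_pow_mul_indicator_Iio_one]
    push_cast
    ring
  have hpolar := integral_radial_mul_angular (volume : Measure (EuclideanSpace ℝ (Fin (m + 2))))
    ((Iio 1).indicator 1) fun x ↦ g ⟪x, u⟫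
  have hcyl : ∫ x : EuclideanSpace ℝ (Fin (m + 2)), (Iio 1).indicator 1 ‖x‖ * g ⟪‖x‖⁻¹ • x, u⟫ =
      ∫ p : ℝ × EuclideanSpace ℝ (Fin (m + 1)), zonalCutoff g p.1 ‖p.2‖ := by
    simp only [real_inner_comm u, real_inner_smul_right, inv_mul_eq_div]
    exact integral_comp_inner_norm_eq_integral_prod (m + 1) hu
      fun t r ↦ (Iio 1).indicator 1 r * g (t / r)
  rw [hcyl, finrank_euclideanSpace_fin, Nat.add_succ_sub_one, hc,
    integral_prod_euclideanSpace_fun_norm m _ (zonalCutoff.integrable_comp_norm hg _)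
      (zonalCutoff.integrable_indicator_Ioi_pow_mul hg m)] at hpolar
  unfold zonalCutoff at hpolar
  rw [integral_upperHalfPlane_radial_mul_angular, hc] at hpolar
  have hm : (1 / (m + 2) : ℝ) ≠ 0 := by positivity
  exact mul_right_cancel₀ hm (by rw [← hpolar]; ring)

/-- the Funk–Hecke formula for zonal functions. -/
theorem stmt_7 (n : ℕ) (hn : 2 ≤ n) (h : ℝ → ℝ) (hh : Continuous h)
    (v : EuclideanSpace ℝ (Fin n)) (hv : v ≠ 0) :
    (∫ σ : Metric.sphere (0 : EuclideanSpace ℝ (Fin n)) 1,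
        h ⟪(σ : EuclideanSpace ℝ (Fin n)), v⟫
        ∂(volume : Measure (EuclideanSpace ℝ (Fin n))).toSphere) =
      sphereVol (n - 2) *
        ∫ s in (-1 : ℝ)..1, (1 - s ^ 2) ^ (((n : ℝ) - 3) / 2) * h (‖v‖ * s) := by
  obtain ⟨m, rfl⟩ := Nat.exists_eq_add_of_le' hn
  have hv' : ‖v‖ ≠ 0 := norm_ne_zero_iff.2 hv
  have hinner (x : EuclideanSpace ℝ (Fin (m + 2))) : ⟪x, v⟫ = ‖v‖ * ⟪x, ‖v‖⁻¹ • v⟫ := by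
    rw [real_inner_smul_right, mul_inv_cancel_left₀ hv']
  have hu : ‖‖v‖⁻¹ • v‖ = 1 := by rw [norm_smul, norm_inv, norm_norm, inv_mul_cancel₀ hv']
  simp only [hinner]
  rw [integral_sphere_comp_inner_of_norm_eq_one m (g := fun s ↦ h (‖v‖ * s)) (by fun_prop) hu,
    integral_sin_pow_mul_comp_cos m fun s ↦ h (‖v‖ * s), Nat.add_sub_cancel,
    show ((m + 2 : ℕ) : ℝ) - 3 = m - 1 by push_cast; ring]
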